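/- arXiv:2502.06403 — 3 statements merged into one kernel-verified Lean document; each statement's English description precedes it below -/
import Mathlib

section
/- For all real numbers a and b, the integral over ℝ of Φ(a+bx)·φ(x) dx equals Φ(a/√(1+b²)), where Φ and φ are the CDF and PDF of the standard normal distribution. -/
open MeasureTheory Real

/-- Standard normal PDF. -/
noncomputable def stdPDF (x : ℝ) : ℝ := (Real.sqrt (2 * Real.pi))⁻¹ * Real.exp (-(x ^ 2) / 2)

/-- Standard normal CDF. -/
noncomputable def stdCDF (x : ℝ) : ℝ := ∫ t in Set.Iic x, stdPDF t

/-!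
Write `Φ(a + b x) = ∫_{s ≤ a} φ(s + b x) ds` and swap the two integrals. Completing the square
in `x` shows `∫ φ(s + b x) φ(x) dx = φ(s / c) / c` with `c = √(1 + b²)`, and integrating this
over `s ≤ a` gives `Φ(a / c)`.
-/

open ProbabilityTheory Set

lemma setIntegral_Iic_comp_add_right {E : Type*} [NormedAddCommGroup E] [NormedSpace ℝ E]
    (f : ℝ → E) (a c : ℝ) : ∫ x in Iic a, f (x + c) = ∫ x in Iic (a + c), f x := by
  have h := (measurePreserving_add_right volume c).setIntegral_preimage_emb
    (measurableEmbedding_addRight c) f (Iic (a + c))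
  rwa [preimage_add_const_Iic, add_sub_cancel_right] at h

lemma setIntegral_Iic_comp_inv_mul {E : Type*} [NormedAddCommGroup E] [NormedSpace ℝ E]
    (f : ℝ → E) {c : ℝ} (hc : 0 < c) (a : ℝ) :
    ∫ x in Iic a, f (c⁻¹ * x) = c • ∫ x in Iic (c⁻¹ * a), f x := by
  simpa [LinearOrderedField.smul_Iic (inv_pos.2 hc)] using
    Measure.setIntegral_comp_smul_of_pos volume f (Iic a) (inv_pos.2 hc)

lemma stdPDF_eq_gaussianPDFReal : stdPDF = gaussianPDFReal 0 1 := by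
  ext x
  simp [stdPDF, gaussianPDFReal]

lemma stdPDF_nonneg (x : ℝ) : 0 ≤ stdPDF x :=
  stdPDF_eq_gaussianPDFReal ▸ gaussianPDFReal_nonneg 0 1 x

lemma integrable_stdPDF : Integrable stdPDF :=
  stdPDF_eq_gaussianPDFReal ▸ integrable_gaussianPDFReal 0 1

lemma continuous_stdPDF : Continuous stdPDF := by
  unfold stdPDF
  fun_prop

-- Completing the square in `x`.
lemma stdPDF_add_mul_mul_stdPDF (s b x : ℝ) :
    stdPDF (s + b * x) * stdPDF x = (√(1 + b ^ 2))⁻¹ * stdPDF (s / √(1 + b ^ 2)) *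
      gaussianPDFReal (-(b * s / (1 + b ^ 2))) (1 + b ^ 2)⁻¹.toNNReal x := by
  have hq : 0 < 1 + b ^ 2 := by positivity
  have hvar : √(2 * π * (1 + b ^ 2)⁻¹) = √(2 * π) / √(1 + b ^ 2) := by
    rw [sqrt_mul (by positivity), Real.sqrt_inv, div_eq_mul_inv]
  have hexp : -(s + b * x) ^ 2 / 2 + -x ^ 2 / 2 = -(s / √(1 + b ^ 2)) ^ 2 / 2 +
      -(x - -(b * s / (1 + b ^ 2))) ^ 2 / (2 * (1 + b ^ 2)⁻¹) := by
    rw [div_pow, sq_sqrt hq.le]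
    field_simp
    ring
  simp only [stdPDF, gaussianPDFReal, Real.coe_toNNReal _ (inv_pos.2 hq).le, hvar]
  rw [mul_mul_mul_comm, ← exp_add, hexp, exp_add]
  field_simp

lemma integrable_stdPDF_add_mul_mul_stdPDF (s b : ℝ) :
    Integrable fun x ↦ stdPDF (s + b * x) * stdPDF x := by
  simp_rw [stdPDF_add_mul_mul_stdPDF]
  exact (integrable_gaussianPDFReal _ _).const_mul _

lemma integral_stdPDF_add_mul_mul_stdPDF (s b : ℝ) :
    ∫ x, stdPDF (s + b * x) * stdPDF x = (√(1 + b ^ 2))⁻¹ * stdPDF (s / √(1 + b ^ 2)) := by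
  have hq : 0 < 1 + b ^ 2 := by positivity
  simp_rw [stdPDF_add_mul_mul_stdPDF, integral_const_mul]
  rw [integral_gaussianPDFReal_eq_one _ (by simpa using hq), mul_one]

lemma integrable_uncurry_stdPDF_add_mul_mul_stdPDF (b : ℝ) :
    Integrable (Function.uncurry fun x s ↦ stdPDF (s + b * x) * stdPDF x) (volume.prod volume) := by
  have hmeas : AEStronglyMeasurable (Function.uncurry fun x s ↦ stdPDF (s + b * x) * stdPDF x)
      (volume.prod volume) :=
    ((continuous_stdPDF.comp (by fun_prop)).mul
      (continuous_stdPDF.comp continuous_fst)).aestronglyMeasurable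
  refine (integrable_prod_iff' hmeas).2
    ⟨.of_forall fun s ↦ integrable_stdPDF_add_mul_mul_stdPDF s b, ?_⟩
  simp_rw [Function.uncurry_apply_pair,
    Real.norm_of_nonneg (mul_nonneg (stdPDF_nonneg _) (stdPDF_nonneg _)),
    integral_stdPDF_add_mul_mul_stdPDF, div_eq_inv_mul]
  exact (integrable_stdPDF.comp_mul_left' (by positivity)).const_mul _

theorem gaussian_cdf_smoothing (a b : ℝ) :
    (∫ x : ℝ, stdCDF (a + b * x) * stdPDF x) = stdCDF (a / Real.sqrt (1 + b ^ 2)) := by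
  have hc : 0 < √(1 + b ^ 2) := sqrt_pos.2 (by positivity)
  calc ∫ x, stdCDF (a + b * x) * stdPDF x
      = ∫ x, ∫ s in Iic a, stdPDF (s + b * x) * stdPDF x := by
        simp_rw [stdCDF, ← setIntegral_Iic_comp_add_right, integral_mul_const]
    _ = ∫ s in Iic a, ∫ x, stdPDF (s + b * x) * stdPDF x :=
        integral_integral_swap <| (integrable_uncurry_stdPDF_add_mul_mul_stdPDF b).mono_measure
          (Measure.prod_mono le_rfl Measure.restrict_le_self)
    _ = ∫ s in Iic a, (√(1 + b ^ 2))⁻¹ * stdPDF ((√(1 + b ^ 2))⁻¹ * s) := by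
        simp_rw [integral_stdPDF_add_mul_mul_stdPDF, div_eq_inv_mul]
    _ = stdCDF (a / √(1 + b ^ 2)) := by
        rw [integral_const_mul, setIntegral_Iic_comp_inv_mul _ hc, smul_eq_mul,
          inv_mul_cancel_left₀ hc.ne', stdCDF, div_eq_inv_mul]
end

section
/- If (U, V) is a bivariate Gaussian vector with means (μ_x, μ_o), variances (K_xx, K_oo) and covariance K_xo, with s² := K_xx + K_oo − 2K_xo > 0, and σ > 0, then E[U·1_{U > V + σ}] = μ_x·(1 − Φ((μ_o + σ − μ_x)/s)) + ((K_xx − K_xo)/s)·φ((μ_o + σ − μ_x)/s). -/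
/-!
With `D := U - V` and `κ := (Kxx - Kxo) / s²`, write `U = κ D + W` where `W := U - κ D`.
The choice of `κ` makes `W` uncorrelated with `D`, and since `(D, W)` is a linear image of the
Gaussian vector `(U, V)`, the two are independent. Hence on the event `{U > V + σ} = {D > σ}`,
`E[U; D > σ] = κ E[D; D > σ] + E[W] P(D > σ)`, and both terms are explicit for the Gaussian
`D ~ N(μx - μo, s²)`: `P(D > σ) = 1 - Φ(α)` and `E[D; D > σ] = (μx - μo)(1 - Φ(α)) + s φ(α)`,
where `α = (μo + σ - μx) / s` and the last identity comes from `φ' x = -x φ x`.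
-/

open MeasureTheory ProbabilityTheory Real

open Set Filter
open scoped Topology NNReal

lemma gaussianPDFReal_zero_one : gaussianPDFReal 0 1 = stdPDF := by
  ext x; simp [gaussianPDFReal, stdPDF]

lemma hasDerivAt_stdPDF (x : ℝ) : HasDerivAt stdPDF (-x * stdPDF x) x := by
  have h : HasDerivAt (fun y : ℝ => -(y ^ 2) / 2) (-x) x :=
    ((hasDerivAt_pow 2 x).fun_neg.div_const 2).congr_deriv (by ring)
  exact (h.exp.const_mul (√(2 * π))⁻¹).congr_deriv (by rw [stdPDF]; ring)

lemma tendsto_stdPDF_atTop : Tendsto stdPDF atTop (𝓝 0) := by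
  have h : Tendsto (fun x : ℝ => -(x ^ 2) / 2) atTop atBot :=
    (tendsto_neg_atTop_atBot.comp (tendsto_pow_atTop two_ne_zero)).atBot_div_const two_pos
  have := (tendsto_exp_atBot.comp h).const_mul (√(2 * π))⁻¹
  rwa [mul_zero] at this

lemma integrable_mul_stdPDF : Integrable fun x : ℝ => x * stdPDF x := by
  refine ((integrable_mul_exp_neg_mul_sq (b := 1 / 2) (by norm_num)).const_mul
    (√(2 * π))⁻¹).congr (ae_of_all _ fun x => ?_)
  simp only [stdPDF]; ring_nf

lemma integral_Ioi_mul_stdPDF (α : ℝ) : ∫ x in Ioi α, x * stdPDF x = stdPDF α := by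
  have h := integral_Ioi_of_hasDerivAt_of_tendsto' (a := α)
    (fun x _ => (hasDerivAt_stdPDF x).neg) (by simpa using integrable_mul_stdPDF.integrableOn)
    tendsto_stdPDF_atTop.neg
  simpa using h

lemma setIntegral_gaussianReal_zero_one {s : Set ℝ} (hs : MeasurableSet s) (f : ℝ → ℝ) :
    ∫ x in s, f x ∂gaussianReal 0 1 = ∫ x in s, f x * stdPDF x := by
  rw [← integral_indicator hs, ← integral_indicator hs,
    integral_gaussianReal_eq_integral_smul one_ne_zero, gaussianPDFReal_zero_one]
  congr 1 with x
  by_cases hx : x ∈ s <;> simp [hx, mul_comm]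

lemma gaussianReal_zero_one_real_Ioi (α : ℝ) :
    (gaussianReal 0 1).real (Ioi α) = 1 - stdCDF α := by
  have h : (gaussianReal 0 1).real (Iic α) = stdCDF α := by
    simpa [stdCDF] using setIntegral_gaussianReal_zero_one measurableSet_Iic 1
  rw [← compl_Iic, probReal_compl_eq_one_sub measurableSet_Iic, h]

lemma setIntegral_Ioi_id_gaussianReal_zero_one (α : ℝ) :
    ∫ x in Ioi α, x ∂gaussianReal 0 1 = stdPDF α := by
  rw [setIntegral_gaussianReal_zero_one measurableSet_Ioi, integral_Ioi_mul_stdPDF]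

lemma gaussianReal_eq_map_zero_one (m : ℝ) (v : ℝ≥0) :
    gaussianReal m v = (gaussianReal 0 1).map fun z => √v * z + m := by
  rw [← Function.comp_def (· + m) (√v * ·),
    ← Measure.map_map (measurable_add_const m) (measurable_const_mul _),
    gaussianReal_map_const_mul, gaussianReal_map_add_const]
  simp

lemma preimage_mul_add_Ioi {r : ℝ} (hr : 0 < r) (m a : ℝ) :
    (fun z => r * z + m) ⁻¹' Ioi a = Ioi ((a - m) / r) := by
  ext z; simp [div_lt_iff₀ hr, mul_comm, sub_lt_iff_lt_add]

section GaussianTail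

variable {m : ℝ} {v : ℝ≥0}

lemma gaussianReal_real_Ioi (hv : v ≠ 0) (a : ℝ) :
    (gaussianReal m v).real (Ioi a) = 1 - stdCDF ((a - m) / √v) := by
  rw [gaussianReal_eq_map_zero_one, map_measureReal_apply (by fun_prop) measurableSet_Ioi,
    preimage_mul_add_Ioi (by positivity), gaussianReal_zero_one_real_Ioi]

lemma setIntegral_Ioi_id_gaussianReal (hv : v ≠ 0) (a : ℝ) :
    ∫ x in Ioi a, x ∂gaussianReal m v
      = m * (1 - stdCDF ((a - m) / √v)) + √v * stdPDF ((a - m) / √v) := by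
  have hid : Integrable (fun z : ℝ => z) (gaussianReal 0 1) :=
    (memLp_id_gaussianReal 1).integrable le_rfl
  rw [gaussianReal_eq_map_zero_one, setIntegral_map measurableSet_Ioi (by fun_prop) (by fun_prop),
    preimage_mul_add_Ioi (by positivity),
    integral_add (hid.const_mul _).integrableOn (integrable_const m).integrableOn,
    integral_const_mul, setIntegral_Ioi_id_gaussianReal_zero_one, setIntegral_const,
    gaussianReal_zero_one_real_Ioi, smul_eq_mul]
  ring

end GaussianTail

section GaussianPair

variable {Ω : Type*} {mΩ : MeasurableSpace Ω} {P : Measure Ω} {X Y : Ω → ℝ} {m : ℝ} {v : ℝ≥0}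

lemma aemeasurable_of_map_eq_gaussianReal (h : P.map X = gaussianReal m v) : AEMeasurable X P :=
  aemeasurable_of_map_neZero (by rw [h]; infer_instance)

lemma integrable_of_map_eq_gaussianReal (h : P.map X = gaussianReal m v) : Integrable X P := by
  have hX := aemeasurable_of_map_eq_gaussianReal h
  have hid : Integrable id (P.map X) := h ▸ (memLp_id_gaussianReal 1).integrable le_rfl
  exact (integrable_map_measure aestronglyMeasurable_id hX).1 hid

lemma integral_eq_of_map_eq_gaussianReal (h : P.map X = gaussianReal m v) : P[X] = m := by
  rw [← integral_id_gaussianReal (μ := m) (v := v), ← h]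
  exact (integral_map (aemeasurable_of_map_eq_gaussianReal h) aestronglyMeasurable_id).symm

lemma variance_eq_of_map_eq_gaussianReal (h : P.map X = gaussianReal m v) : Var[X; P] = v := by
  rw [← variance_id_gaussianReal (μ := m) (v := v), ← h,
    variance_id_map (aemeasurable_of_map_eq_gaussianReal h)]

lemma hasGaussianLaw_prodMk_of_map_eq_gaussianReal
    (h : ∀ a b : ℝ, ∃ m v, P.map (fun ω => a * X ω + b * Y ω) = gaussianReal m v) :
    HasGaussianLaw (fun ω => (X ω, Y ω)) P := by
  have hX : AEMeasurable X P := by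
    obtain ⟨m, v, hm⟩ := h 1 0
    simpa using aemeasurable_of_map_eq_gaussianReal hm
  have hY : AEMeasurable Y P := by
    obtain ⟨m, v, hm⟩ := h 0 1
    simpa using aemeasurable_of_map_eq_gaussianReal hm
  refine ⟨isGaussian_of_map_eq_gaussianReal fun L => ?_⟩
  obtain ⟨m, v, hm⟩ := h (L (1, 0)) (L (0, 1))
  refine ⟨m, v, ?_⟩
  rw [AEMeasurable.map_map_of_aemeasurable (by fun_prop) (by fun_prop), ← hm]
  congr 1 with ω
  have hω : (X ω, Y ω) = X ω • ((1 : ℝ), (0 : ℝ)) + Y ω • ((0 : ℝ), (1 : ℝ)) := by simp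
  rw [Function.comp_apply, hω, map_add, map_smul, map_smul, smul_eq_mul, smul_eq_mul,
    mul_comm, mul_comm (Y ω)]

/-- Only the shape of `t ↦ Var[X + t Y]` near `t = 0` is assumed: Gaussian parameters pass
through `Real.toNNReal`, so the variance formula is only known where it is positive. -/
lemma covariance_eq_of_eventually_variance_eq [IsFiniteMeasure P] (hX : MemLp X 2 P)
    (hY : MemLp Y 2 P) {a b c : ℝ}
    (h : ∀ᶠ t in 𝓝 0, Var[fun ω => X ω + t * Y ω; P] = a + 2 * t * b + t ^ 2 * c) :
    cov[X, Y; P] = b := by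
  have hquad (t : ℝ) : Var[fun ω => X ω + t * Y ω; P]
      = Var[X; P] + 2 * t * cov[X, Y; P] + t ^ 2 * Var[Y; P] := by
    rw [variance_fun_add hX (hY.const_mul t), covariance_const_mul_right, variance_const_mul]
    ring
  have h' := (continuous_neg.tendsto' (0 : ℝ) 0 neg_zero).eventually h
  obtain ⟨t, ⟨hpos, hneg⟩, ht⟩ :=
    (((h.and h').filter_mono nhdsWithin_le_nhds).and self_mem_nhdsWithin).exists
      (f := 𝓝[>] (0 : ℝ))
  rw [hquad] at hpos hneg
  have : 4 * t * (cov[X, Y; P] - b) = 0 := by linear_combination hpos - hneg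
  simpa [ht.ne', sub_eq_zero] using this

lemma indepFun_of_map_add_mul_eq_gaussianReal [IsProbabilityMeasure P]
    (hXY : HasGaussianLaw (fun ω => (X ω, Y ω)) P) {a c : ℝ} (ha : 0 < a)
    (h : ∀ t : ℝ, ∃ m, P.map (fun ω => X ω + t * Y ω) = gaussianReal m (a + t ^ 2 * c).toNNReal) :
    IndepFun X Y P := by
  refine hXY.indepFun_of_covariance_eq_zero <|
    covariance_eq_of_eventually_variance_eq hXY.fst.memLp_two hXY.snd.memLp_two (a := a) (c := c) ?_
  have hpos : ∀ᶠ t in 𝓝 (0 : ℝ), 0 < a + t ^ 2 * c :=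
    (by fun_prop : Continuous fun t : ℝ => a + t ^ 2 * c).tendsto' 0 a (by simp)
      |>.eventually (lt_mem_nhds ha)
  filter_upwards [hpos] with t ht
  obtain ⟨m, hm⟩ := h t
  rw [variance_eq_of_map_eq_gaussianReal hm, Real.coe_toNNReal _ ht.le]
  ring

lemma integral_indicator_preimage_mul_add_of_indepFun {D W : Ω → ℝ} (hDW : IndepFun D W P)
    (hD : Integrable D P) (hW : Integrable W P) {s : Set ℝ} (hs : MeasurableSet s) (κ : ℝ) :
    ∫ ω, (D ⁻¹' s).indicator (fun ω => κ * D ω + W ω) ω ∂P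
      = κ * ∫ x in s, x ∂P.map D + P[W] * (P.map D).real s := by
  have hid : Measurable (s.indicator fun x : ℝ => x) := measurable_id'.indicator hs
  have hone : Measurable (s.indicator (1 : ℝ → ℝ)) := measurable_one.indicator hs
  have hsplit : (D ⁻¹' s).indicator (fun ω => κ * D ω + W ω)
      = fun ω => κ * s.indicator (fun x => x) (D ω) + W ω * s.indicator 1 (D ω) := by
    ext ω
    by_cases h : D ω ∈ s <;> simp [h]
  have hint₁ : Integrable (fun ω => s.indicator (fun x => x) (D ω)) P :=
    hD.mono (hid.comp_aemeasurable hD.aemeasurable).aestronglyMeasurable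
      (ae_of_all _ fun ω => norm_indicator_le_norm_self _ _)
  have hint₂ : Integrable (fun ω => W ω * s.indicator 1 (D ω)) P := by
    refine hW.mono (hW.aestronglyMeasurable.mul
      (hone.comp_aemeasurable hD.aemeasurable).aestronglyMeasurable) (ae_of_all _ fun ω => ?_)
    by_cases h : D ω ∈ s <;> simp [h]
  rw [hsplit, integral_add (hint₁.const_mul κ) hint₂, integral_const_mul,
    hDW.symm.integral_fun_comp_mul_comp (f := fun x => x) hW.aemeasurable hD.aemeasurable
      aestronglyMeasurable_id hone.aestronglyMeasurable,
    ← integral_map hD.aemeasurable hid.aestronglyMeasurable,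
    ← integral_map hD.aemeasurable hone.aestronglyMeasurable, integral_indicator_one hs,
    integral_indicator hs]

lemma indepFun_sub_of_map_eq_gaussianReal [IsProbabilityMeasure P] {U V : Ω → ℝ}
    {μx μo Kxx Koo Kxo κ : ℝ}
    (hs : 0 < Kxx + Koo - 2 * Kxo) (hκ : κ * (Kxx + Koo - 2 * Kxo) = Kxx - Kxo)
    (hjoint : ∀ a b : ℝ, P.map (fun ω => a * U ω + b * V ω) =
      gaussianReal (a * μx + b * μo) (a ^ 2 * Kxx + b ^ 2 * Koo + 2 * a * b * Kxo).toNNReal) :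
    IndepFun (fun ω => U ω - V ω) (fun ω => U ω - κ * (U ω - V ω)) P := by
  have hcomb (a b : ℝ) : P.map (fun ω => a * (U ω - V ω) + b * (U ω - κ * (U ω - V ω)))
      = P.map (fun ω => (a + b * (1 - κ)) * U ω + (b * κ - a) * V ω) := by
    congr 1 with ω; ring
  refine indepFun_of_map_add_mul_eq_gaussianReal
    (hasGaussianLaw_prodMk_of_map_eq_gaussianReal fun a b => ⟨_, _, (hcomb a b).trans (hjoint _ _)⟩)
    (c := (1 - κ) ^ 2 * Kxx + κ ^ 2 * Koo + 2 * (1 - κ) * κ * Kxo) hs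
    fun t => ⟨(1 + t * (1 - κ)) * μx + (t * κ - 1) * μo, ?_⟩
  have h := (hcomb 1 t).trans (hjoint _ _)
  simp only [one_mul] at h
  rw [h]
  congr 2
  linear_combination -2 * t * hκ

end GaussianPair

theorem expected_utility_threshold_comparison_general
    {Ω : Type*} [MeasureSpace Ω] [IsProbabilityMeasure (ℙ : Measure Ω)]
    (U V : Ω → ℝ) (μx μo Kxx Koo Kxo σ : ℝ)
    (hs : 0 < Kxx + Koo - 2 * Kxo)
    (hjoint : ∀ a b : ℝ,
      Measure.map (fun ω => a * U ω + b * V ω) ℙ =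
        gaussianReal (a * μx + b * μo)
          (Real.toNNReal (a ^ 2 * Kxx + b ^ 2 * Koo + 2 * a * b * Kxo))) :
    (∫ ω, Set.indicator {ω' | V ω' + σ < U ω'} U ω ∂ℙ) =
      μx * (1 - stdCDF ((μo + σ - μx) / Real.sqrt (Kxx + Koo - 2 * Kxo)))
        + ((Kxx - Kxo) / Real.sqrt (Kxx + Koo - 2 * Kxo))
            * stdPDF ((μo + σ - μx) / Real.sqrt (Kxx + Koo - 2 * Kxo)) := by
  set s2 := Kxx + Koo - 2 * Kxo
  set κ := (Kxx - Kxo) / s2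
  have hκ : κ * s2 = Kxx - Kxo := div_mul_cancel₀ _ hs.ne'
  set D : Ω → ℝ := fun ω => U ω - V ω
  set W : Ω → ℝ := fun ω => U ω - κ * D ω
  have hind : IndepFun D W ℙ := indepFun_sub_of_map_eq_gaussianReal hs hκ hjoint
  have hDlaw : Measure.map D ℙ = gaussianReal (μx - μo) s2.toNNReal := by
    convert hjoint 1 (-1) using 2
    · ext ω; ring
    · ring
    · congr 1; ring
  have hWlaw : Measure.map W ℙ = gaussianReal ((1 - κ) * μx + κ * μo)
      ((1 - κ) ^ 2 * Kxx + κ ^ 2 * Koo + 2 * (1 - κ) * κ * Kxo).toNNReal := by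
    rw [← hjoint]
    congr 1 with ω
    ring
  have hevent : {ω | V ω + σ < U ω}.indicator U
      = (D ⁻¹' Ioi σ).indicator fun ω => κ * D ω + W ω := by
    congr 1
    · ext ω; simp only [mem_ofPred_eq, mem_preimage, mem_Ioi, D, lt_sub_iff_add_lt']
    · ext ω; ring
  have hv : s2.toNNReal ≠ 0 := (Real.toNNReal_pos.2 hs).ne'
  have hκs : κ * √s2 = (Kxx - Kxo) / √s2 := by
    rw [← hκ, eq_div_iff (sqrt_pos.2 hs).ne', mul_assoc, mul_self_sqrt hs.le]
  rw [hevent, integral_indicator_preimage_mul_add_of_indepFun hind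
      (integrable_of_map_eq_gaussianReal hDlaw) (integrable_of_map_eq_gaussianReal hWlaw)
      measurableSet_Ioi, integral_eq_of_map_eq_gaussianReal hWlaw, hDlaw,
    setIntegral_Ioi_id_gaussianReal hv, gaussianReal_real_Ioi hv, Real.coe_toNNReal _ hs.le,
    show σ - (μx - μo) = μo + σ - μx by ring]
  linear_combination stdPDF ((μo + σ - μx) / √s2) * hκs

/-- Expected utility of `U` on the event `U > V + σ`, for a bivariate Gaussian
vector `(U, V)`; joint Gaussianity is encoded via linear combinations. -/
theorem expected_utility_threshold_comparison
    {Ω : Type*} [MeasureSpace Ω] [IsProbabilityMeasure (ℙ : Measure Ω)]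
    (U V : Ω → ℝ) (μx μo Kxx Koo Kxo σ : ℝ) (hσ : 0 < σ)
    (hs : 0 < Kxx + Koo - 2 * Kxo)
    (hjoint : ∀ a b : ℝ,
      Measure.map (fun ω => a * U ω + b * V ω) ℙ =
        gaussianReal (a * μx + b * μo)
          (Real.toNNReal (a ^ 2 * Kxx + b ^ 2 * Koo + 2 * a * b * Kxo))) :
    (∫ ω, Set.indicator {ω' | V ω' + σ < U ω'} U ω ∂ℙ) =
      μx * (1 - stdCDF ((μo + σ - μx) / Real.sqrt (Kxx + Koo - 2 * Kxo)))
        + ((Kxx - Kxo) / Real.sqrt (Kxx + Koo - 2 * Kxo))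
            * stdPDF ((μo + σ - μx) / Real.sqrt (Kxx + Koo - 2 * Kxo)) :=
  expected_utility_threshold_comparison_general U V μx μo Kxx Koo Kxo σ hs hjoint
end

section
/- Let ν: X → ℝᵈ be a vector-valued utility on a finite set X, and define C(A) = ⋃_{k=1}^{d} argmax_{z ∈ A} ν_k(z) (e-admissibility). Then C satisfies path independence: C(A ∪ B) = C(C(A) ∪ B) for all nonempty A, B ⊆ X. -/
open Finset

/-- e-admissibility choice function: union over coordinates of the argmax sets. -/
noncomputable def eAdmissibleChoice {X : Type*} [DecidableEq X] {d : ℕ}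
    (ν : X → (Fin d → ℝ)) (A : Finset X) : Finset X :=
  (Finset.univ : Finset (Fin d)).biUnion
    (fun k => A.filter (fun z => ∀ y ∈ A, ν y k ≤ ν z k))

lemma mem_eAdmissibleChoice {X : Type*} [DecidableEq X] {d : ℕ}
    (ν : X → (Fin d → ℝ)) (A : Finset X) (z : X) :
    z ∈ eAdmissibleChoice ν A ↔ ∃ k, z ∈ A ∧ ∀ y ∈ A, ν y k ≤ ν z k := by
  simp [eAdmissibleChoice]

lemma eAdmissibleChoice_subset {X : Type*} [DecidableEq X] {d : ℕ}
    (ν : X → (Fin d → ℝ)) (A : Finset X) : eAdmissibleChoice ν A ⊆ A := by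
  intro z hz
  rw [mem_eAdmissibleChoice] at hz
  obtain ⟨k, hzA, _⟩ := hz
  exact hzA

/-- Path independence of the e-admissibility choice function. -/
theorem eAdmissibleChoice_path_independent
    {X : Type*} [Fintype X] [DecidableEq X] {d : ℕ} (ν : X → (Fin d → ℝ))
    (A B : Finset X) (hA : A.Nonempty) (hB : B.Nonempty) :
    eAdmissibleChoice ν (A ∪ B) = eAdmissibleChoice ν (eAdmissibleChoice ν A ∪ B) := by
  ext z
  rw [mem_eAdmissibleChoice, mem_eAdmissibleChoice]
  constructor
  · rintro ⟨k, hz, hmax⟩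
    refine ⟨k, ?_, ?_⟩
    · rcases Finset.mem_union.1 hz with hzA | hzB
      · refine Finset.mem_union_left _ ?_
        rw [mem_eAdmissibleChoice]
        exact ⟨k, hzA, fun y hy => hmax y (Finset.mem_union_left _ hy)⟩
      · exact Finset.mem_union_right _ hzB
    · intro y hy
      rcases Finset.mem_union.1 hy with hyA | hyB
      · exact hmax y (Finset.mem_union_left _ (eAdmissibleChoice_subset ν A hyA))
      · exact hmax y (Finset.mem_union_right _ hyB)
  · rintro ⟨k, hz, hmax⟩
    refine ⟨k, ?_, ?_⟩
    · rcases Finset.mem_union.1 hz with hzC | hzB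
      · exact Finset.mem_union_left _ (eAdmissibleChoice_subset ν A hzC)
      · exact Finset.mem_union_right _ hzB
    · intro y hy
      rcases Finset.mem_union.1 hy with hyA | hyB
      · obtain ⟨a, haA, ha⟩ := A.exists_max_image (fun x => ν x k) hA
        have haC : a ∈ eAdmissibleChoice ν A := by
          rw [mem_eAdmissibleChoice]; exact ⟨k, haA, ha⟩
        exact le_trans (ha y hyA) (hmax a (Finset.mem_union_left _ haC))
      · exact hmax y (Finset.mem_union_right _ hyB)
end
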